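/- arXiv:2209.14572 — 3 statements merged into one kernel-verified Lean document; each statement's English description precedes it below -/
import Mathlib

section
/- Let α, β be C¹ functions on an interval (p₁,p₂) (−∞ ≤ p₁ < p₂ ≤ ∞) with α > 0 and β ≥ 0. Let f be a smooth solution on the rectangle (p₁,p₂) × (z₁,z₂) of the system (f² − β)·(f'_p)² − α·(1 + (f'_z)²) = 0 and α·f·f''_{zz} − β·(f'_p)² + f³·f'_p·(1 + (f'_z)²) = 0, satisfying f(p,z) > √(β(p)) on the rectangle. Then f'_p never vanishes; let ε = ±1 be its (constant) sign. Then there exists a C¹ function γ on (p₁,p₂) satisfying, on the whole rectangle, the equation f²·(εf² + γ)²·(1 + (f'_z)²) − 4α·(f² − β) = 0 and the inequalities 0 < εf² + γ ≤ 2·α^{1/2}·√(f² − β)/f. -/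
/-- Partial derivative in the second variable (`z`). -/
noncomputable def pdz (F : ℝ → ℝ → ℝ) (p z : ℝ) : ℝ := deriv (fun s => F p s) z

/-- Partial derivative in the first variable (`p`). -/
noncomputable def pdp (F : ℝ → ℝ → ℝ) (p z : ℝ) : ℝ := deriv (fun s => F s z) p

/-- Second partial derivative in the second variable. -/
noncomputable def pdzz (F : ℝ → ℝ → ℝ) (p z : ℝ) : ℝ := deriv (fun s => pdz F p s) z

/-- The real points of the (possibly infinite) open interval `(p₁, p₂)` with
`p₁, p₂ ∈ [−∞, ∞]`. -/
def erealIoo (p₁ p₂ : EReal) : Set ℝ := {p : ℝ | p₁ < (p : EReal) ∧ (p : EReal) < p₂}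

/-!
Differentiating the first equation in `z` and eliminating `f''_{zz}` with the second gives
`α (f'_z f'_p + f f''_{pz}) + f³ f'_z f'_p² = 0`, which says exactly that
`∂_z (2α / (f f'_p) - f²) = 0`. So this first integral depends on `p` alone, and `γ` is `ε` times
it. The first equation forces `f'_p ≠ 0`, hence `f'_p` has a constant sign `ε` on the connected
rectangle, and then `ε f² + γ = 2α / (f |f'_p|)`; substituting
`f'_p² = α (1 + f'_z²) / (f² - β)` gives the identity and the bounds.
-/

open Set Filter Topology

theorem isOpen_erealIoo (p₁ p₂ : EReal) : IsOpen (erealIoo p₁ p₂) :=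
  isOpen_Ioo.preimage continuous_coe_real_ereal

theorem convex_erealIoo (p₁ p₂ : EReal) : Convex ℝ (erealIoo p₁ p₂) :=
  (ordConnected_Ioo.preimage_mono EReal.coe_strictMono.monotone).convex

theorem IsPreconnected.exists_sign_mul_pos {X : Type*} [TopologicalSpace X] {S : Set X}
    {g : X → ℝ} (hS : IsPreconnected S) (hg : ContinuousOn g S) (hg0 : ∀ x ∈ S, g x ≠ 0) :
    ∃ ε : ℝ, (ε = 1 ∨ ε = -1) ∧ ∀ x ∈ S, 0 < ε * g x := by
  rcases hS.eq_or_eq_neg_of_sq_eq hg hg.abs (fun x _ => by simp [sq_abs])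
      (fun hx => abs_ne_zero.2 (hg0 _ hx)) with h | h
  · exact ⟨1, .inl rfl, fun x hx => by rw [one_mul, h hx]; exact abs_pos.2 (hg0 x hx)⟩
  · exact ⟨-1, .inr rfl, fun x hx => by
      rw [h hx, Pi.neg_apply, neg_one_mul, neg_neg]; exact abs_pos.2 (hg0 x hx)⟩

section PartialDerivatives

variable {F : ℝ → ℝ → ℝ} {p z : ℝ}

theorem pdp_eq_fderiv (hF : DifferentiableAt ℝ (fun v : ℝ × ℝ => F v.1 v.2) (p, z)) :
    pdp F p z = fderiv ℝ (fun v : ℝ × ℝ => F v.1 v.2) (p, z) (1, 0) := by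
  have hline := (hasDerivAt_id' p).prodMk (hasDerivAt_const p z)
  exact (hF.hasFDerivAt.comp_hasDerivAt p hline).deriv

theorem pdz_eq_fderiv (hF : DifferentiableAt ℝ (fun v : ℝ × ℝ => F v.1 v.2) (p, z)) :
    pdz F p z = fderiv ℝ (fun v : ℝ × ℝ => F v.1 v.2) (p, z) (0, 1) := by
  have hline := (hasDerivAt_const z p).prodMk (hasDerivAt_id' z)
  exact (hF.hasFDerivAt.comp_hasDerivAt z hline).deriv

theorem hasDerivAt_pdz (hF : DifferentiableAt ℝ (fun v : ℝ × ℝ => F v.1 v.2) (p, z)) :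
    HasDerivAt (fun s => F p s) (pdz F p z) z :=
  (hF.comp z (differentiableAt_const p |>.prodMk differentiableAt_id)).hasDerivAt

variable {n m : WithTop ℕ∞} {U : Set (ℝ × ℝ)}

theorem ContDiffOn.pdp (hF : ContDiffOn ℝ n (fun v : ℝ × ℝ => F v.1 v.2) U) (hU : IsOpen U)
    (hmn : m + 1 ≤ n) : ContDiffOn ℝ m (fun v : ℝ × ℝ => pdp F v.1 v.2) U :=
  ((hF.fderiv_of_isOpen hU hmn).clm_apply contDiffOn_const).congr fun v hv =>
    pdp_eq_fderiv ((hF.contDiffAt (hU.mem_nhds hv)).differentiableAt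
      (by rintro rfl; simp at hmn))

theorem ContDiffOn.pdz (hF : ContDiffOn ℝ n (fun v : ℝ × ℝ => F v.1 v.2) U) (hU : IsOpen U)
    (hmn : m + 1 ≤ n) : ContDiffOn ℝ m (fun v : ℝ × ℝ => pdz F v.1 v.2) U :=
  ((hF.fderiv_of_isOpen hU hmn).clm_apply contDiffOn_const).congr fun v hv =>
    pdz_eq_fderiv ((hF.contDiffAt (hU.mem_nhds hv)).differentiableAt
      (by rintro rfl; simp at hmn))

theorem ContDiffOn.comp_prodMk_const {V : Set ℝ} {W : Set ℝ}
    (hF : ContDiffOn ℝ n (fun v : ℝ × ℝ => F v.1 v.2) (V ×ˢ W)) (hz : z ∈ W) :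
    ContDiffOn ℝ n (fun s => F s z) V :=
  hF.comp (contDiff_id.prodMk contDiff_const).contDiffOn fun _ hs => ⟨hs, hz⟩

end PartialDerivatives

-- `2α / (f f'_p) - f²` with `a = α`, `u = f`, `v = f'_p`.
noncomputable def clairautIntegral (a u v : ℝ) : ℝ := 2 * a / (u * v) - u ^ 2

theorem ContDiffOn.clairautIntegral {n : WithTop ℕ∞} {s : Set ℝ} {a u v : ℝ → ℝ}
    (ha : ContDiffOn ℝ n a s) (hu : ContDiffOn ℝ n u s) (hv : ContDiffOn ℝ n v s)
    (huv : ∀ x ∈ s, u x * v x ≠ 0) :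
    ContDiffOn ℝ n (fun x => clairautIntegral (a x) (u x) (v x)) s :=
  ((contDiffOn_const.mul ha).div (hu.mul hv) huv).sub (hu.pow 2)

section Algebra

variable {a b u v w : ℝ}

theorem sub_pos_and_ne_zero_of_clairaut_eq (ha : 0 < a)
    (h1 : (u ^ 2 - b) * v ^ 2 - a * (1 + w ^ 2) = 0) : 0 < u ^ 2 - b ∧ v ≠ 0 := by
  have hpos : 0 < (u ^ 2 - b) * v ^ 2 := by nlinarith [sq_nonneg w]
  refine ⟨pos_of_mul_pos_left hpos (sq_nonneg v), ?_⟩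
  rintro rfl
  simp at hpos

-- `h1'` is the `z`-derivative of `h1` when `u' = w`, i.e. `∂_z` of the first equation.
theorem clairaut_key_identity {v' w' : ℝ} (ha : 0 < a)
    (h1 : (u ^ 2 - b) * v ^ 2 - a * (1 + w ^ 2) = 0)
    (h1' : 2 * u * w * v ^ 2 + (u ^ 2 - b) * (2 * v * v') - a * (2 * w * w') = 0)
    (h2 : a * u * w' - b * v ^ 2 + u ^ 3 * v * (1 + w ^ 2) = 0) :
    a * w * v + a * u * v' + u ^ 3 * w * v ^ 2 = 0 := by
  obtain ⟨hb, hv⟩ := sub_pos_and_ne_zero_of_clairaut_eq ha h1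
  have hmul : (a * w * v + a * u * v' + u ^ 3 * w * v ^ 2) * (2 * (u ^ 2 - b) * v) = 0 := by
    linear_combination a * u * h1' + 2 * a * w * h2 + 2 * w * u ^ 3 * v * h1
  exact (mul_eq_zero.1 hmul).resolve_right (by positivity)

theorem clairaut_bounds {ε : ℝ} (hε : ε = 1 ∨ ε = -1) (ha : 0 < a) (hu : 0 < u)
    (hv : 0 < ε * v) (h1 : (u ^ 2 - b) * v ^ 2 - a * (1 + w ^ 2) = 0) :
    u ^ 2 * (ε * u ^ 2 + ε * clairautIntegral a u v) ^ 2 * (1 + w ^ 2)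
        - 4 * a * (u ^ 2 - b) = 0 ∧
      0 < ε * u ^ 2 + ε * clairautIntegral a u v ∧
      ε * u ^ 2 + ε * clairautIntegral a u v ≤ 2 * √a * √(u ^ 2 - b) / u := by
  obtain ⟨hb, hv0⟩ := sub_pos_and_ne_zero_of_clairaut_eq ha h1
  have hε2 : ε ^ 2 = 1 := by rcases hε with rfl | rfl <;> norm_num
  have hc : ε * u ^ 2 + ε * clairautIntegral a u v = 2 * a * (ε * v) / (u * v ^ 2) := by
    unfold clairautIntegral; field_simp; ring
  set c := ε * u ^ 2 + ε * clairautIntegral a u v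
  have heq : u ^ 2 * c ^ 2 * (1 + w ^ 2) - 4 * a * (u ^ 2 - b) = 0 := by
    rw [hc]; field_simp
    linear_combination 4 * a ^ 2 * (1 + w ^ 2) * hε2 - 4 * a * h1
  have hcpos : 0 < c := by rw [hc]; positivity
  refine ⟨heq, hcpos, ?_⟩
  have hsq : (u * c) ^ 2 ≤ (2 * √a * √(u ^ 2 - b)) ^ 2 := by
    rw [mul_pow, mul_pow, mul_pow, Real.sq_sqrt ha.le, Real.sq_sqrt hb.le]
    nlinarith [sq_nonneg w, sq_nonneg (u * c)]
  rw [le_div_iff₀ hu, mul_comm]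
  exact (pow_le_pow_iff_left₀ (by positivity) (by positivity) two_ne_zero).1 hsq

end Algebra

theorem hasDerivAt_clairautIntegral {a b z v' w' : ℝ} {u v w : ℝ → ℝ} (ha : 0 < a)
    (hu : HasDerivAt u (w z) z) (hv : HasDerivAt v v' z) (hw : HasDerivAt w w' z)
    (hu0 : u z ≠ 0)
    (h1 : ∀ᶠ y in 𝓝 z, (u y ^ 2 - b) * v y ^ 2 - a * (1 + w y ^ 2) = 0)
    (h2 : a * u z * w' - b * v z ^ 2 + u z ^ 3 * v z * (1 + w z ^ 2) = 0) :
    HasDerivAt (fun y => clairautIntegral a (u y) (v y)) 0 z := by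
  have hΦ := (((hu.fun_pow 2).sub_const b).fun_mul (hv.fun_pow 2)).fun_sub
    (((hw.fun_pow 2).const_add 1).const_mul a)
  have h1' := hΦ.unique ((hasDerivAt_const z 0).congr_of_eventuallyEq h1)
  have hv0 := (sub_pos_and_ne_zero_of_clairaut_eq ha h1.self_of_nhds).2
  have key := clairaut_key_identity (v' := v') (w' := w') ha h1.self_of_nhds
    (by norm_num at h1'; linear_combination h1') h2
  show HasDerivAt (fun y => 2 * a / (u y * v y) - u y ^ 2) 0 z
  refine (((hasDerivAt_const z (2 * a)).fun_div (hu.fun_mul hv) (mul_ne_zero hu0 hv0)).fun_sub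
    (hu.fun_pow 2)).congr_deriv ?_
  field_simp
  linear_combination -2 * key

theorem IsOpen.clairautIntegral_eq {s : Set ℝ} (hs : IsOpen s) (hs' : IsPreconnected s)
    {a b : ℝ} {u v w v' w' : ℝ → ℝ} (ha : 0 < a)
    (hu : ∀ z ∈ s, HasDerivAt u (w z) z) (hv : ∀ z ∈ s, HasDerivAt v (v' z) z)
    (hw : ∀ z ∈ s, HasDerivAt w (w' z) z) (hu0 : ∀ z ∈ s, u z ≠ 0)
    (h1 : ∀ z ∈ s, (u z ^ 2 - b) * v z ^ 2 - a * (1 + w z ^ 2) = 0)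
    (h2 : ∀ z ∈ s, a * u z * w' z - b * v z ^ 2 + u z ^ 3 * v z * (1 + w z ^ 2) = 0)
    {x y : ℝ} (hx : x ∈ s) (hy : y ∈ s) :
    clairautIntegral a (u x) (v x) = clairautIntegral a (u y) (v y) := by
  have hd : ∀ z ∈ s, HasDerivAt (fun y => clairautIntegral a (u y) (v y)) 0 z := fun z hz =>
    hasDerivAt_clairautIntegral ha (hu z hz) (hv z hz) (hw z hz) (hu0 z hz)
      (eventually_of_mem (hs.mem_nhds hz) h1) (h2 z hz)
  exact hs.is_const_of_deriv_eq_zero hs'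
    (fun z hz => (hd z hz).differentiableAt.differentiableWithinAt) (fun z hz => (hd z hz).deriv)
    hx hy

theorem clairaut_integral_exists_general (p₁ p₂ : EReal) (z₁ z₂ : ℝ)
    (α β : ℝ → ℝ)
    (hα : ContDiffOn ℝ 1 α (erealIoo p₁ p₂))
    (hαpos : ∀ p ∈ erealIoo p₁ p₂, 0 < α p)
    (f : ℝ → ℝ → ℝ)
    (hf : ContDiffOn ℝ (⊤ : ℕ∞) (fun v : ℝ × ℝ => f v.1 v.2)
      (erealIoo p₁ p₂ ×ˢ Set.Ioo z₁ z₂))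
    (heq1 : ∀ p ∈ erealIoo p₁ p₂, ∀ z ∈ Set.Ioo z₁ z₂,
      ((f p z) ^ 2 - β p) * (pdp f p z) ^ 2 - α p * (1 + (pdz f p z) ^ 2) = 0)
    (heq2 : ∀ p ∈ erealIoo p₁ p₂, ∀ z ∈ Set.Ioo z₁ z₂,
      α p * f p z * pdzz f p z - β p * (pdp f p z) ^ 2
        + (f p z) ^ 3 * pdp f p z * (1 + (pdz f p z) ^ 2) = 0)
    (hfβ : ∀ p ∈ erealIoo p₁ p₂, ∀ z ∈ Set.Ioo z₁ z₂, Real.sqrt (β p) < f p z) :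
    (∀ p ∈ erealIoo p₁ p₂, ∀ z ∈ Set.Ioo z₁ z₂, pdp f p z ≠ 0) ∧
    ∃ ε : ℝ, (ε = 1 ∨ ε = -1) ∧
      (∀ p ∈ erealIoo p₁ p₂, ∀ z ∈ Set.Ioo z₁ z₂, 0 < ε * pdp f p z) ∧
      ∃ γ : ℝ → ℝ, ContDiffOn ℝ 1 γ (erealIoo p₁ p₂) ∧
        ∀ p ∈ erealIoo p₁ p₂, ∀ z ∈ Set.Ioo z₁ z₂,
          (f p z) ^ 2 * (ε * (f p z) ^ 2 + γ p) ^ 2 * (1 + (pdz f p z) ^ 2)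
              - 4 * α p * ((f p z) ^ 2 - β p) = 0 ∧
          0 < ε * (f p z) ^ 2 + γ p ∧
          ε * (f p z) ^ 2 + γ p
            ≤ 2 * Real.sqrt (α p) * Real.sqrt ((f p z) ^ 2 - β p) / f p z := by
  set R := erealIoo p₁ p₂ ×ˢ Ioo z₁ z₂
  have hR : IsOpen R := (isOpen_erealIoo p₁ p₂).prod isOpen_Ioo
  have hf_p := hf.pdp hR (m := (⊤ : ℕ∞)) (by simp)
  have hf_z := hf.pdz hR (m := (⊤ : ℕ∞)) (by simp)
  have hdiff {g : ℝ → ℝ → ℝ} (hg : ContDiffOn ℝ (⊤ : ℕ∞) (fun v : ℝ × ℝ => g v.1 v.2) R)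
      {p z : ℝ} (hp : p ∈ erealIoo p₁ p₂) (hz : z ∈ Ioo z₁ z₂) :
      DifferentiableAt ℝ (fun v : ℝ × ℝ => g v.1 v.2) (p, z) :=
    (hg.contDiffAt (hR.mem_nhds ⟨hp, hz⟩)).differentiableAt (by simp)
  have hfpos : ∀ p ∈ erealIoo p₁ p₂, ∀ z ∈ Ioo z₁ z₂, 0 < f p z := fun p hp z hz =>
    (Real.sqrt_nonneg _).trans_lt (hfβ p hp z hz)
  have hpdp_ne : ∀ p ∈ erealIoo p₁ p₂, ∀ z ∈ Ioo z₁ z₂, pdp f p z ≠ 0 := fun p hp z hz =>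
    (sub_pos_and_ne_zero_of_clairaut_eq (hαpos p hp) (heq1 p hp z hz)).2
  obtain ⟨ε, hε, hεpos⟩ :=
    ((convex_erealIoo p₁ p₂).prod (convex_Ioo z₁ z₂)).isPreconnected.exists_sign_mul_pos
      hf_p.continuousOn fun v hv => hpdp_ne _ hv.1 _ hv.2
  refine ⟨hpdp_ne, ε, hε, fun p hp z hz => hεpos (p, z) ⟨hp, hz⟩, ?_⟩
  rcases (Ioo z₁ z₂).eq_empty_or_nonempty with hempty | ⟨z₀, hz₀⟩
  · exact ⟨0, contDiffOn_const, by simp [hempty]⟩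
  have hconst : ∀ p ∈ erealIoo p₁ p₂, ∀ z ∈ Ioo z₁ z₂,
      clairautIntegral (α p) (f p z) (pdp f p z)
        = clairautIntegral (α p) (f p z₀) (pdp f p z₀) := fun p hp z hz =>
    isOpen_Ioo.clairautIntegral_eq isPreconnected_Ioo (hαpos p hp)
      (fun z hz => hasDerivAt_pdz (hdiff hf hp hz)) (fun z hz => hasDerivAt_pdz (hdiff hf_p hp hz))
      (fun z hz => hasDerivAt_pdz (hdiff hf_z hp hz)) (fun z hz => (hfpos p hp z hz).ne')
      (heq1 p hp) (heq2 p hp) hz hz₀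
  refine ⟨fun q => ε * clairautIntegral (α q) (f q z₀) (pdp f q z₀), ?_, fun p hp z hz => ?_⟩
  · have hf₀ := (hf.comp_prodMk_const hz₀).of_le (m := 1) (by simp)
    have hf_p₀ := (hf_p.comp_prodMk_const hz₀).of_le (m := 1) (by simp)
    exact contDiffOn_const.mul (hα.clairautIntegral hf₀ hf_p₀ fun q hq =>
      mul_ne_zero (hfpos q hq z₀ hz₀).ne' (hpdp_ne q hq z₀ hz₀))
  · dsimp only
    rw [← hconst p hp z hz]
    exact clairaut_bounds hε (hαpos p hp) (hfpos p hp z hz) (hεpos (p, z) ⟨hp, hz⟩)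
      (heq1 p hp z hz)

/-- Lemma 7.1, part 1: if `f` solves the system
`(f²−β)f'_p² − α(1+f'_z²) = 0`, `αff''_{zz} − βf'_p² + f³f'_p(1+f'_z²) = 0` on the
rectangle `(p₁,p₂)×(z₁,z₂)` with `f > √β`, then `f'_p` never vanishes, it has a constant
sign `ε = ±1`, and there is a C¹ function `γ(p)` with
`f²(εf²+γ)²(1+f'_z²) − 4α(f²−β) = 0` and `0 < εf²+γ ≤ 2√α √(f²−β)/f`. -/
theorem clairaut_integral_exists (p₁ p₂ : EReal) (hp : p₁ < p₂) (z₁ z₂ : ℝ)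
    (α β : ℝ → ℝ)
    (hα : ContDiffOn ℝ 1 α (erealIoo p₁ p₂)) (hβ : ContDiffOn ℝ 1 β (erealIoo p₁ p₂))
    (hαpos : ∀ p ∈ erealIoo p₁ p₂, 0 < α p) (hβnn : ∀ p ∈ erealIoo p₁ p₂, 0 ≤ β p)
    (f : ℝ → ℝ → ℝ)
    (hf : ContDiffOn ℝ (⊤ : ℕ∞) (fun v : ℝ × ℝ => f v.1 v.2)
      (erealIoo p₁ p₂ ×ˢ Set.Ioo z₁ z₂))
    (heq1 : ∀ p ∈ erealIoo p₁ p₂, ∀ z ∈ Set.Ioo z₁ z₂,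
      ((f p z) ^ 2 - β p) * (pdp f p z) ^ 2 - α p * (1 + (pdz f p z) ^ 2) = 0)
    (heq2 : ∀ p ∈ erealIoo p₁ p₂, ∀ z ∈ Set.Ioo z₁ z₂,
      α p * f p z * pdzz f p z - β p * (pdp f p z) ^ 2
        + (f p z) ^ 3 * pdp f p z * (1 + (pdz f p z) ^ 2) = 0)
    (hfβ : ∀ p ∈ erealIoo p₁ p₂, ∀ z ∈ Set.Ioo z₁ z₂, Real.sqrt (β p) < f p z) :
    (∀ p ∈ erealIoo p₁ p₂, ∀ z ∈ Set.Ioo z₁ z₂, pdp f p z ≠ 0) ∧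
    ∃ ε : ℝ, (ε = 1 ∨ ε = -1) ∧
      (∀ p ∈ erealIoo p₁ p₂, ∀ z ∈ Set.Ioo z₁ z₂, 0 < ε * pdp f p z) ∧
      ∃ γ : ℝ → ℝ, ContDiffOn ℝ 1 γ (erealIoo p₁ p₂) ∧
        ∀ p ∈ erealIoo p₁ p₂, ∀ z ∈ Set.Ioo z₁ z₂,
          (f p z) ^ 2 * (ε * (f p z) ^ 2 + γ p) ^ 2 * (1 + (pdz f p z) ^ 2)
              - 4 * α p * ((f p z) ^ 2 - β p) = 0 ∧
          0 < ε * (f p z) ^ 2 + γ p ∧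
          ε * (f p z) ^ 2 + γ p
            ≤ 2 * Real.sqrt (α p) * Real.sqrt ((f p z) ^ 2 - β p) / f p z :=
  clairaut_integral_exists_general p₁ p₂ z₁ z₂ α β hα hαpos f hf heq1 heq2 hfβ
end

section
/- Let α, β, γ be C¹ functions on an interval (p₁,p₂) (−∞ ≤ p₁ < p₂ ≤ ∞) with α > 0 and β ≥ 0, and let ε = ±1. Let f be a smooth function on the rectangle (p₁,p₂) × (z₁,z₂) with f > √β, satisfying (f² − β)·(f'_p)² − α·(1 + (f'_z)²) = 0, the equation f²·(εf² + γ)²·(1 + (f'_z)²) − 4α·(f² − β) = 0, the inequalities 0 < εf² + γ ≤ 2·α^{1/2}·√(f² − β)/f, and such that ε is the sign of the (nonvanishing) derivative f'_p. Assume additionally that for every p ∈ (p₁,p₂), the function z ↦ f'_z(p,z) is not identically zero on any nonempty open subinterval of (z₁,z₂). Then f also satisfies α·f·f''_{zz} − β·(f'_p)² + f³·f'_p·(1 + (f'_z)²) = 0 on the rectangle. -/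
/-!
Fix `p` and write `Q = ε f² + γ`, `u = f'_p`, `w = f'_z`. Eliminating `f² − β` between the two
first-order equations gives `(f Q u)² = 4α²`, and the sign conditions select `f Q u = 2αε`.
Differentiating the second equation in `z` gives `2 w G = 0`, where `G` is, after substituting
`f Q u = 2αε`, the product of `f² Q²` with the second-order expression to be shown to vanish.
So `G = 0` wherever `w ≠ 0`, a dense subset of `(z₁, z₂)`, hence everywhere by continuity.
-/

open Set

theorem Ioo_subset_closure_of_forall_exists_mem {z₁ z₂ : ℝ} {T : Set ℝ}
    (h : ∀ a b : ℝ, a < b → Ioo a b ⊆ Ioo z₁ z₂ → ∃ z ∈ Ioo a b, z ∈ T) :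
    Ioo z₁ z₂ ⊆ closure (Ioo z₁ z₂ ∩ T) := by
  intro t ⟨ht₁, ht₂⟩
  refine Metric.mem_closure_iff.2 fun δ hδ => ?_
  have hsub : Ioo (max (t - δ) z₁) (min (t + δ) z₂) ⊆ Ioo z₁ z₂ :=
    Ioo_subset_Ioo (le_max_right _ _) (min_le_right _ _)
  have hne : max (t - δ) z₁ < min (t + δ) z₂ :=
    (max_lt (by linarith) ht₁).trans (lt_min (by linarith) ht₂)
  obtain ⟨u, hu, huT⟩ := h _ _ hne hsub
  refine ⟨u, ⟨hsub hu, huT⟩, ?_⟩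
  rw [Real.dist_eq, abs_sub_lt_iff]
  have hlo := max_lt_iff.1 hu.1
  have hhi := lt_min_iff.1 hu.2
  constructor <;> linarith

theorem eqOn_zero_of_mul_eq_zero_of_forall_exists_ne {z₁ z₂ : ℝ} {G w : ℝ → ℝ}
    (hG : ContinuousOn G (Ioo z₁ z₂)) (hGw : ∀ z ∈ Ioo z₁ z₂, w z * G z = 0)
    (hw : ∀ a b : ℝ, a < b → Ioo a b ⊆ Ioo z₁ z₂ → ∃ z ∈ Ioo a b, w z ≠ 0) :
    EqOn G 0 (Ioo z₁ z₂) :=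
  Set.EqOn.of_subset_closure (s := Ioo z₁ z₂ ∩ {z | w z ≠ 0})
    (fun z ⟨hz, hwz⟩ => (mul_eq_zero.1 (hGw z hz)).resolve_left hwz)
    hG continuousOn_const inter_subset_left (Ioo_subset_closure_of_forall_exists_mem hw)

theorem deriv_mul_eq_zero_of_eqOn_zero {U : Set ℝ} (hU : IsOpen U) {g : ℝ → ℝ}
    (hg : ContDiffOn ℝ 2 g U) (a b c ε : ℝ)
    (hE : ∀ z ∈ U, g z ^ 2 * (ε * g z ^ 2 + c) ^ 2 * (1 + deriv g z ^ 2)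
      - 4 * a * (g z ^ 2 - b) = 0) :
    ∀ z ∈ U, deriv g z * (a * g z ^ 3 * (ε * g z ^ 2 + c) ^ 2 * deriv (deriv g) z
      - 4 * a ^ 2 * b + 2 * a * ε * g z ^ 4 * (ε * g z ^ 2 + c) * (1 + deriv g z ^ 2)) = 0 := by
  intro z hz
  have hzU := hU.mem_nhds hz
  have hg₁ : HasDerivAt g (deriv g z) z :=
    ((hg.differentiableOn two_ne_zero).differentiableAt hzU).hasDerivAt
  have hg₂ : HasDerivAt (deriv g) (deriv (deriv g) z) z :=
    (((hg.deriv_of_isOpen hU le_rfl).differentiableOn one_ne_zero).differentiableAt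
      hzU).hasDerivAt
  have hE' := (((hg₁.pow 2).mul ((((hg₁.pow 2).const_mul ε).add_const c).pow 2)).mul
    ((hg₂.pow 2).const_add 1)).sub (((hg₁.pow 2).sub_const b).const_mul (4 * a))
  have hE₀ := (hasDerivAt_const z (0 : ℝ)).congr_of_eventuallyEq
    (Filter.eventually_of_mem hzU hE)
  have hD := hE'.unique hE₀
  norm_num only [Pi.pow_apply, Pi.mul_apply] at hD
  linear_combination (a * g z / 2) * hD - deriv g z * a * hE z hz

theorem eqOn_zero_of_eqOn_zero_of_forall_exists_deriv_ne {z₁ z₂ : ℝ} {g : ℝ → ℝ}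
    (hg : ContDiffOn ℝ 2 g (Ioo z₁ z₂)) (a b c ε : ℝ)
    (hE : ∀ z ∈ Ioo z₁ z₂, g z ^ 2 * (ε * g z ^ 2 + c) ^ 2 * (1 + deriv g z ^ 2)
      - 4 * a * (g z ^ 2 - b) = 0)
    (hg' : ∀ a b : ℝ, a < b → Ioo a b ⊆ Ioo z₁ z₂ → ∃ z ∈ Ioo a b, deriv g z ≠ 0) :
    ∀ z ∈ Ioo z₁ z₂, a * g z ^ 3 * (ε * g z ^ 2 + c) ^ 2 * deriv (deriv g) z
      - 4 * a ^ 2 * b + 2 * a * ε * g z ^ 4 * (ε * g z ^ 2 + c) * (1 + deriv g z ^ 2) = 0 := by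
  have h₀ : ContinuousOn g (Ioo z₁ z₂) := hg.continuousOn
  have h₁ : ContinuousOn (deriv g) (Ioo z₁ z₂) :=
    hg.continuousOn_deriv_of_isOpen isOpen_Ioo one_le_two
  have h₂ : ContinuousOn (deriv (deriv g)) (Ioo z₁ z₂) :=
    (hg.deriv_of_isOpen isOpen_Ioo le_rfl).continuousOn_deriv_of_isOpen isOpen_Ioo le_rfl
  exact eqOn_zero_of_mul_eq_zero_of_forall_exists_ne (by fun_prop)
    (deriv_mul_eq_zero_of_eqOn_zero isOpen_Ioo hg a b c ε hE) hg'

theorem mul_mul_eq_of_sq_mul_sq_eq {f Q u w α β ε : ℝ} (hε : ε ^ 2 = 1) (hα : 0 < α)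
    (hf : 0 < f) (hQ : 0 < Q) (hu : 0 < ε * u)
    (h₁ : (f ^ 2 - β) * u ^ 2 - α * (1 + w ^ 2) = 0)
    (h₉ : f ^ 2 * Q ^ 2 * (1 + w ^ 2) - 4 * α * (f ^ 2 - β) = 0) :
    f * Q * u = 2 * α * ε := by
  have hsq : (ε * (f * Q * u)) ^ 2 = (2 * α) ^ 2 := by
    have hfac : ((f * Q * u) ^ 2 - (2 * α) ^ 2) * (1 + w ^ 2) = 0 := by
      linear_combination u ^ 2 * h₉ + 4 * α * h₁
    linear_combination (mul_eq_zero.1 hfac).resolve_right (by positivity) + (f * Q * u) ^ 2 * hε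
  have hpos : 0 < ε * (f * Q * u) := by nlinarith [mul_pos hf hQ]
  have hεfQu := (pow_left_inj₀ hpos.le (by positivity) two_ne_zero).1 hsq
  linear_combination ε * hεfQu - f * Q * u * hε

theorem eq_zero_of_mul_mul_eq {f Q u w s α β ε : ℝ} (hε : ε ^ 2 = 1) (hf : f ≠ 0) (hQ : Q ≠ 0)
    (hfQu : f * Q * u = 2 * α * ε)
    (hG : α * f ^ 3 * Q ^ 2 * s - 4 * α ^ 2 * β + 2 * α * ε * f ^ 4 * Q * (1 + w ^ 2) = 0) :
    α * f * s - β * u ^ 2 + f ^ 3 * u * (1 + w ^ 2) = 0 := by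
  have h : (α * f * s - β * u ^ 2 + f ^ 3 * u * (1 + w ^ 2)) * (f * Q) ^ 2 = 0 := by
    linear_combination hG + (f ^ 4 * Q * (1 + w ^ 2) - β * (f * Q * u + 2 * α * ε)) * hfQu
      - 4 * α ^ 2 * β * hε
  exact (mul_eq_zero.1 h).resolve_right (by positivity)

theorem clairaut_integral_converse_general (p₁ p₂ : EReal) (z₁ z₂ : ℝ)
    (α β γ : ℝ → ℝ)
    (hαpos : ∀ p ∈ erealIoo p₁ p₂, 0 < α p)
    (ε : ℝ) (hε : ε = 1 ∨ ε = -1)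
    (f : ℝ → ℝ → ℝ)
    (hf : ContDiffOn ℝ (⊤ : ℕ∞) (fun v : ℝ × ℝ => f v.1 v.2)
      (erealIoo p₁ p₂ ×ˢ Set.Ioo z₁ z₂))
    (hfβ : ∀ p ∈ erealIoo p₁ p₂, ∀ z ∈ Set.Ioo z₁ z₂, Real.sqrt (β p) < f p z)
    (heq1 : ∀ p ∈ erealIoo p₁ p₂, ∀ z ∈ Set.Ioo z₁ z₂,
      ((f p z) ^ 2 - β p) * (pdp f p z) ^ 2 - α p * (1 + (pdz f p z) ^ 2) = 0)
    (heq9 : ∀ p ∈ erealIoo p₁ p₂, ∀ z ∈ Set.Ioo z₁ z₂,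
      (f p z) ^ 2 * (ε * (f p z) ^ 2 + γ p) ^ 2 * (1 + (pdz f p z) ^ 2)
        - 4 * α p * ((f p z) ^ 2 - β p) = 0)
    (hineq : ∀ p ∈ erealIoo p₁ p₂, ∀ z ∈ Set.Ioo z₁ z₂,
      0 < ε * (f p z) ^ 2 + γ p ∧
      ε * (f p z) ^ 2 + γ p
        ≤ 2 * Real.sqrt (α p) * Real.sqrt ((f p z) ^ 2 - β p) / f p z)
    (hsign : ∀ p ∈ erealIoo p₁ p₂, ∀ z ∈ Set.Ioo z₁ z₂, 0 < ε * pdp f p z)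
    (hnondeg : ∀ p ∈ erealIoo p₁ p₂, ∀ a b : ℝ, a < b → Set.Ioo a b ⊆ Set.Ioo z₁ z₂ →
      ∃ z ∈ Set.Ioo a b, pdz f p z ≠ 0) :
    ∀ p ∈ erealIoo p₁ p₂, ∀ z ∈ Set.Ioo z₁ z₂,
      α p * f p z * pdzz f p z - β p * (pdp f p z) ^ 2
        + (f p z) ^ 3 * pdp f p z * (1 + (pdz f p z) ^ 2) = 0 := by
  intro p hp z hz
  have hslice : ContDiffOn ℝ 2 (f p) (Ioo z₁ z₂) :=
    (hf.comp (contDiff_const.prodMk contDiff_id).contDiffOn fun _ ht => ⟨hp, ht⟩).of_le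
      (WithTop.coe_le_coe.2 le_top)
  have hε₂ : ε ^ 2 = 1 := by rcases hε with rfl | rfl <;> norm_num
  have hf₀ : 0 < f p z := (Real.sqrt_nonneg _).trans_lt (hfβ p hp z hz)
  have hQ := (hineq p hp z hz).1
  have hG := eqOn_zero_of_eqOn_zero_of_forall_exists_deriv_ne hslice (α p) (β p) (γ p) ε
    (heq9 p hp) (hnondeg p hp) z hz
  have hfQu := mul_mul_eq_of_sq_mul_sq_eq hε₂ (hαpos p hp) hf₀ hQ (hsign p hp z hz)
    (heq1 p hp z hz) (heq9 p hp z hz)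
  exact eq_zero_of_mul_mul_eq hε₂ hf₀.ne' hQ.ne' hfQu hG

/-- Lemma 7.1, part 2: conversely, if `f > √β` satisfies
`(f²−β)f'_p² − α(1+f'_z²) = 0` and `f²(εf²+γ)²(1+f'_z²) − 4α(f²−β) = 0` with
`0 < εf²+γ ≤ 2√α√(f²−β)/f`, where `ε = ±1` is the sign of the nonvanishing `f'_p`, and if
for every `p` the derivative `f'_z(p,·)` is not identically zero on any nonempty open
subinterval of `(z₁,z₂)`, then `f` also satisfies
`αff''_{zz} − βf'_p² + f³f'_p(1+f'_z²) = 0`. -/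
theorem clairaut_integral_converse (p₁ p₂ : EReal) (hp : p₁ < p₂) (z₁ z₂ : ℝ)
    (α β γ : ℝ → ℝ)
    (hα : ContDiffOn ℝ 1 α (erealIoo p₁ p₂)) (hβ : ContDiffOn ℝ 1 β (erealIoo p₁ p₂))
    (hγ : ContDiffOn ℝ 1 γ (erealIoo p₁ p₂))
    (hαpos : ∀ p ∈ erealIoo p₁ p₂, 0 < α p) (hβnn : ∀ p ∈ erealIoo p₁ p₂, 0 ≤ β p)
    (ε : ℝ) (hε : ε = 1 ∨ ε = -1)
    (f : ℝ → ℝ → ℝ)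
    (hf : ContDiffOn ℝ (⊤ : ℕ∞) (fun v : ℝ × ℝ => f v.1 v.2)
      (erealIoo p₁ p₂ ×ˢ Set.Ioo z₁ z₂))
    (hfβ : ∀ p ∈ erealIoo p₁ p₂, ∀ z ∈ Set.Ioo z₁ z₂, Real.sqrt (β p) < f p z)
    (heq1 : ∀ p ∈ erealIoo p₁ p₂, ∀ z ∈ Set.Ioo z₁ z₂,
      ((f p z) ^ 2 - β p) * (pdp f p z) ^ 2 - α p * (1 + (pdz f p z) ^ 2) = 0)
    (heq9 : ∀ p ∈ erealIoo p₁ p₂, ∀ z ∈ Set.Ioo z₁ z₂,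
      (f p z) ^ 2 * (ε * (f p z) ^ 2 + γ p) ^ 2 * (1 + (pdz f p z) ^ 2)
        - 4 * α p * ((f p z) ^ 2 - β p) = 0)
    (hineq : ∀ p ∈ erealIoo p₁ p₂, ∀ z ∈ Set.Ioo z₁ z₂,
      0 < ε * (f p z) ^ 2 + γ p ∧
      ε * (f p z) ^ 2 + γ p
        ≤ 2 * Real.sqrt (α p) * Real.sqrt ((f p z) ^ 2 - β p) / f p z)
    (hsign : ∀ p ∈ erealIoo p₁ p₂, ∀ z ∈ Set.Ioo z₁ z₂, 0 < ε * pdp f p z)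
    (hnondeg : ∀ p ∈ erealIoo p₁ p₂, ∀ a b : ℝ, a < b → Set.Ioo a b ⊆ Set.Ioo z₁ z₂ →
      ∃ z ∈ Set.Ioo a b, pdz f p z ≠ 0) :
    ∀ p ∈ erealIoo p₁ p₂, ∀ z ∈ Set.Ioo z₁ z₂,
      α p * f p z * pdzz f p z - β p * (pdp f p z) ^ 2
        + (f p z) ^ 3 * pdp f p z * (1 + (pdz f p z) ^ 2) = 0 :=
  clairaut_integral_converse_general p₁ p₂ z₁ z₂ α β γ hαpos ε hε f hf hfβ heq1 heq9 hineq hsign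
    hnondeg
end

section
/- Let α, β, γ be C¹ functions on an interval (p₁,p₂) with α > 0 and β ≥ 0, let ε = ±1, and let f be a smooth solution on the rectangle (p₁,p₂) × (z₁,z₂) of the system (f²−β)·(f'_p)² − α·(1+(f'_z)²) = 0 and f²·(εf²+γ)²·(1+(f'_z)²) − 4α·(f²−β) = 0, satisfying f > √β on the rectangle (so that f'_p never vanishes and ε is its sign). Suppose there is a point (p₀,z₀) ∈ (p₁,p₂) × (z₁,z₂) with f'_z(p₀,z₀) = 0 and f''_{zz}(p₀,z₀) ≠ 0. Then there exists δ > 0 such that f is symmetric with respect to z₀ near p₀: f(p,z) = f(p, 2z₀ − z) for all p ∈ (p₀−δ, p₀+δ) and all z with both z and 2z₀−z in (z₁,z₂). In particular f'_z(p, z₀) = 0 for all p ∈ (p₀−δ, p₀+δ), and f extends to a solution on (p₀−δ,p₀+δ) × (z₀−Δ, z₀+Δ) with (z₁,z₂) ⊆ (z₀−Δ, z₀+Δ). -/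
open Set Filter Topology Function

theorem IsPreconnected.eqOn_of_eq_imp_eventuallyEq {X E : Type*} [TopologicalSpace X]
    [TopologicalSpace E] [T2Space E] {s : Set X} (hs : IsPreconnected s) {g₁ g₂ : X → E}
    (hg₁ : ContinuousOn g₁ s) (hg₂ : ContinuousOn g₂ s)
    (hloc : ∀ x ∈ s, g₁ x = g₂ x → g₁ =ᶠ[𝓝[s] x] g₂) {x₀ : X} (hx₀ : x₀ ∈ s)
    (heq : g₁ x₀ = g₂ x₀) : EqOn g₁ g₂ s := by
  intro x hx
  refine (hs.induction₂ (fun x y => (g₁ x = g₂ x ↔ g₁ y = g₂ y)) (fun x hx => ?_)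
    (fun _ _ _ _ _ _ h h' => h.trans h') (fun _ _ _ _ h => h.symm) hx₀ hx).1 heq
  by_cases hx' : g₁ x = g₂ x
  · filter_upwards [hloc x hx hx'] with y hy using iff_of_true hx' hy
  · filter_upwards [((hg₁ x hx).prodMk (hg₂ x hx)).eventually
      (isClosed_diagonal.isOpen_compl.mem_nhds hx')] with y hy using iff_of_false hx' hy

theorem ODE_solution_eqOn_Ioo {E : Type*} [NormedAddCommGroup E] [NormedSpace ℝ E]
    {v : ℝ → E → E} {γ₁ γ₂ : ℝ → E} {a b t₀ : ℝ}
    (hv : ∀ t ∈ Ioo a b, ∃ K, ∃ s ∈ 𝓝 (γ₁ t), ∀ᶠ τ in 𝓝 t, LipschitzOnWith K (v τ) s)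
    (hγ₁ : ∀ t ∈ Ioo a b, HasDerivAt γ₁ (v t (γ₁ t)) t)
    (hγ₂ : ∀ t ∈ Ioo a b, HasDerivAt γ₂ (v t (γ₂ t)) t)
    (ht₀ : t₀ ∈ Ioo a b) (heq : γ₁ t₀ = γ₂ t₀) : EqOn γ₁ γ₂ (Ioo a b) := by
  refine isPreconnected_Ioo.eqOn_of_eq_imp_eventuallyEq
    (fun t ht => (hγ₁ t ht).continuousAt.continuousWithinAt)
    (fun t ht => (hγ₂ t ht).continuousAt.continuousWithinAt) (fun t ht hteq => ?_) ht₀ heq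
  obtain ⟨K, s, hs, hlip⟩ := hv t ht
  have hIoo : ∀ᶠ τ in 𝓝 t, τ ∈ Ioo a b := isOpen_Ioo.mem_nhds ht
  refine nhdsWithin_le_nhds (ODE_solution_unique_of_eventually (s := fun _ => s) hlip ?_ ?_ hteq)
  · filter_upwards [hIoo, (hγ₁ t ht).continuousAt hs] with τ hτ hτs using ⟨hγ₁ τ hτ, hτs⟩
  · filter_upwards [hIoo, (hγ₂ t ht).continuousAt (hteq ▸ hs)] with τ hτ hτs
      using ⟨hγ₂ τ hτ, hτs⟩

theorem eqOn_zero_of_hasDerivAt_mul {K w : ℝ → ℝ} {a b t₀ : ℝ} (hK : ContinuousOn K (Ioo a b))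
    (hw : ∀ t ∈ Ioo a b, HasDerivAt w (K t * w t) t) (ht₀ : t₀ ∈ Ioo a b) (hw₀ : w t₀ = 0) :
    EqOn w 0 (Ioo a b) := by
  refine ODE_solution_eqOn_Ioo (v := fun τ y => K τ • y) (fun t ht => ?_) hw
    (fun t _ => by simp) ht₀ hw₀
  have hbound : ∀ᶠ τ in 𝓝 t, ‖K τ‖₊ ≤ ‖K t‖₊ + 1 :=
    ((hK.continuousAt (isOpen_Ioo.mem_nhds ht)).nnnorm.eventually
      (gt_mem_nhds (lt_add_one _))).mono fun _ h => h.le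
  exact ⟨_, univ, univ_mem, hbound.mono fun τ hτ =>
    ((lipschitzWith_smul (K τ)).weaken hτ).lipschitzOnWith⟩

theorem eq_comp_two_mul_sub_of_hasDerivAt {y u H : ℝ → ℝ} {a b z₀ : ℝ}
    (hy : ∀ t ∈ Ioo a b, HasDerivAt y (u t) t) (hu : ∀ t ∈ Ioo a b, HasDerivAt u (H (y t)) t)
    (hH : ∀ t ∈ Ioo a b, ContDiffAt ℝ 1 H (y t)) (hz₀ : z₀ ∈ Ioo a b) (hu₀ : u z₀ = 0)
    {t : ℝ} (ht : t ∈ Ioo a b) (ht' : 2 * z₀ - t ∈ Ioo a b) : y t = y (2 * z₀ - t) := by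
  have hmem : ∀ τ, τ ∈ Ioo (max a (2 * z₀ - b)) (min b (2 * z₀ - a)) ↔
      τ ∈ Ioo a b ∧ 2 * z₀ - τ ∈ Ioo a b := by
    intro τ; simp only [mem_Ioo, max_lt_iff, lt_min_iff]; constructor <;> intro h <;>
      refine ⟨⟨?_, ?_⟩, ?_, ?_⟩ <;> linarith [h.1, h.2]
  have hreflect : ∀ τ, HasDerivAt (fun s : ℝ => 2 * z₀ - s) (-1) τ := fun τ => by
    simpa using (hasDerivAt_id τ).const_sub (2 * z₀)
  refine congrArg Prod.fst (ODE_solution_eqOn_Ioo (v := fun _ Y => (Y.2, H Y.1))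
    (γ₁ := fun τ => (y τ, u τ)) (γ₂ := fun τ => (y (2 * z₀ - τ), -u (2 * z₀ - τ)))
    (fun τ hτ => ?_) (fun τ hτ => ?_) (fun τ hτ => ?_) ((hmem z₀).2 ?_) ?_ ((hmem t).2 ⟨ht, ht'⟩))
  · obtain ⟨K, s, hs, hlip⟩ := (contDiffAt_snd.prodMk
      ((hH τ ((hmem τ).1 hτ).1).comp (y τ, u τ) contDiffAt_fst)).exists_lipschitzOnWith
    exact ⟨K, s, hs, .of_forall fun _ => hlip⟩
  · exact (hy τ ((hmem τ).1 hτ).1).prodMk (hu τ ((hmem τ).1 hτ).1)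
  · have h := (hmem τ).1 hτ
    simpa using ((hy _ h.2).comp τ (hreflect τ)).prodMk ((hu _ h.2).comp τ (hreflect τ)).neg
  · exact ⟨hz₀, by rwa [two_mul, add_sub_cancel_right]⟩
  · simp [two_mul, hu₀]

/- Off the zero set of `u' - H ∘ y` the function `u` vanishes, so `y` is locally constant and
`u' = 0` there: `u' - H ∘ y` is locally constant where it is nonzero. By connectedness a nonzero
value would then be taken on all of `Ioo a b`, forcing `u ≡ 0`. -/
theorem eqOn_comp_of_mul_sub_eq_zero {y u u' H : ℝ → ℝ} {a b : ℝ}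
    (hy : ∀ t ∈ Ioo a b, HasDerivAt y (u t) t) (hu : ∀ t ∈ Ioo a b, HasDerivAt u (u' t) t)
    (hu' : ContinuousOn u' (Ioo a b)) (hH : ∀ t ∈ Ioo a b, ContinuousAt H (y t))
    (hmul : ∀ t ∈ Ioo a b, u t * (u' t - H (y t)) = 0) (hne : ∃ t ∈ Ioo a b, u t ≠ 0) :
    EqOn u' (H ∘ y) (Ioo a b) := by
  set G : ℝ → ℝ := fun t => u' t - H (y t)
  have hG : ∀ t ∈ Ioo a b, ContinuousAt G t := fun t ht =>
    (hu'.continuousAt (isOpen_Ioo.mem_nhds ht)).sub ((hH t ht).comp (hy t ht).continuousAt)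
  have hlocal : ∀ t ∈ Ioo a b, G t ≠ 0 → G =ᶠ[𝓝 t] fun _ => G t := by
    intro t ht hGt
    obtain ⟨r, hr, hball⟩ := Metric.eventually_nhds_iff_ball.1
      ((show ∀ᶠ τ in 𝓝 t, τ ∈ Ioo a b from isOpen_Ioo.mem_nhds ht).and
        ((hG t ht).eventually_ne hGt))
    have hu0 : ∀ τ ∈ Metric.ball t r, u τ = 0 := fun τ hτ =>
      (mul_eq_zero.1 (hmul τ (hball τ hτ).1)).resolve_right (hball τ hτ).2
    have hu'0 : ∀ τ ∈ Metric.ball t r, u' τ = 0 := fun τ hτ =>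
      ((hu τ (hball τ hτ).1).unique ((hasDerivAt_const τ (0 : ℝ)).congr_of_eventuallyEq
        (eventually_of_mem (Metric.isOpen_ball.mem_nhds hτ) hu0)))
    have hyconst : ∀ τ ∈ Metric.ball t r, y τ = y t := fun τ hτ =>
      Metric.isOpen_ball.is_const_of_deriv_eq_zero (convex_ball t r).isPreconnected
        (fun s hs => (hy s (hball s hs).1).differentiableAt.differentiableWithinAt)
        (fun s hs => ((hy s (hball s hs).1).deriv.trans (hu0 s hs))) hτ (Metric.mem_ball_self hr)
    filter_upwards [Metric.ball_mem_nhds t hr] with τ hτ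
    simp only [G, hu'0 τ hτ, hyconst τ hτ, hu'0 t (Metric.mem_ball_self hr)]
  by_contra hcontra
  obtain ⟨t₁, ht₁, hGt₁⟩ : ∃ t₁ ∈ Ioo a b, G t₁ ≠ 0 := by
    simp only [EqOn, not_forall] at hcontra
    obtain ⟨t₁, ht₁, h⟩ := hcontra
    exact ⟨t₁, ht₁, sub_ne_zero.2 h⟩
  have hconst : EqOn G (fun _ => G t₁) (Ioo a b) :=
    isPreconnected_Ioo.eqOn_of_eq_imp_eventuallyEq (fun t ht => (hG t ht).continuousWithinAt)
      continuousOn_const (fun t ht hGt => nhdsWithin_le_nhds (hGt ▸ hlocal t ht (hGt ▸ hGt₁)))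
      ht₁ rfl
  obtain ⟨t, ht, hut⟩ := hne
  exact hut ((mul_eq_zero.1 (hmul t ht)).resolve_right fun h => hGt₁ ((hconst ht).symm.trans h))

theorem HasDerivAt.mul_sub_half_eq_zero_of_sq_eventuallyEq {y u Φ : ℝ → ℝ} {t u' Φ' : ℝ}
    (hy : HasDerivAt y (u t) t) (hu : HasDerivAt u u' t) (hΦ : HasDerivAt Φ Φ' (y t))
    (h : (fun s => u s ^ 2) =ᶠ[𝓝 t] Φ ∘ y) : u t * (u' - Φ' / 2) = 0 := by
  have := (hu.pow 2).unique ((hΦ.comp t hy).congr_of_eventuallyEq h)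
  push_cast at this
  linear_combination this / 2

section PartialDerivatives

variable {f g : ℝ → ℝ → ℝ} {s : Set (ℝ × ℝ)} {p z : ℝ} {m n : WithTop ℕ∞}

theorem hasDerivAt_pdz_s19 (h : DifferentiableAt ℝ (uncurry f) (p, z)) :
    HasDerivAt (f p) (pdz f p z) z :=
  (h.comp z ((differentiableAt_const p).prodMk differentiableAt_id)).hasDerivAt

theorem hasDerivAt_pdp (h : DifferentiableAt ℝ (uncurry f) (p, z)) :
    HasDerivAt (fun q => f q z) (pdp f p z) p := by
  exact (h.comp p (differentiableAt_id.prodMk (differentiableAt_const z))).hasDerivAt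

theorem pdz_eq_fderiv_s19 (h : DifferentiableAt ℝ (uncurry f) (p, z)) :
    pdz f p z = fderiv ℝ (uncurry f) (p, z) (0, 1) :=
  (h.hasFDerivAt.comp_hasDerivAt z ((hasDerivAt_const z p).prodMk (hasDerivAt_id z))).deriv

theorem pdp_eq_fderiv_s19 (h : DifferentiableAt ℝ (uncurry f) (p, z)) :
    pdp f p z = fderiv ℝ (uncurry f) (p, z) (1, 0) := by
  exact (h.hasFDerivAt.comp_hasDerivAt p ((hasDerivAt_id p).prodMk (hasDerivAt_const p z))).deriv

theorem pdz_congr (h : uncurry f =ᶠ[𝓝 (p, z)] uncurry g) : pdz f p z = pdz g p z :=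
  EventuallyEq.deriv_eq (h.comp_tendsto ((continuous_const.prodMk continuous_id).tendsto' z _ rfl))

theorem pdp_congr (h : uncurry f =ᶠ[𝓝 (p, z)] uncurry g) : pdp f p z = pdp g p z :=
  EventuallyEq.deriv_eq (h.comp_tendsto ((continuous_id.prodMk continuous_const).tendsto' p _ rfl))

theorem contDiffOn_pdz (hs : IsOpen s) (hf : ContDiffOn ℝ n (uncurry f) s) (hmn : m + 1 ≤ n) :
    ContDiffOn ℝ m (uncurry (pdz f)) s := by
  have hn : n ≠ 0 := (zero_lt_one.trans_le (le_add_self.trans hmn)).ne'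
  exact ((ContinuousLinearMap.apply ℝ ℝ ((0 : ℝ), (1 : ℝ))).contDiff.comp_contDiffOn
    (hf.fderiv_of_isOpen hs hmn)).congr fun _ hx =>
      pdz_eq_fderiv_s19 ((hf.contDiffAt (hs.mem_nhds hx)).differentiableAt hn)

theorem contDiffOn_pdp (hs : IsOpen s) (hf : ContDiffOn ℝ n (uncurry f) s) (hmn : m + 1 ≤ n) :
    ContDiffOn ℝ m (uncurry (pdp f)) s := by
  have hn : n ≠ 0 := (zero_lt_one.trans_le (le_add_self.trans hmn)).ne'
  exact ((ContinuousLinearMap.apply ℝ ℝ ((1 : ℝ), (0 : ℝ))).contDiff.comp_contDiffOn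
    (hf.fderiv_of_isOpen hs hmn)).congr fun _ hx =>
      pdp_eq_fderiv_s19 ((hf.contDiffAt (hs.mem_nhds hx)).differentiableAt hn)

theorem pdp_pdz_eq_pdz_pdp (hs : IsOpen s) (hf : ContDiffOn ℝ 2 (uncurry f) s) (hx : (p, z) ∈ s) :
    pdp (pdz f) p z = pdz (pdp f) p z := by
  set F := uncurry f
  have hF : ContDiffAt ℝ 2 F (p, z) := hf.contDiffAt (hs.mem_nhds hx)
  have hd : DifferentiableAt ℝ (fderiv ℝ F) (p, z) :=
    (hF.fderiv_right (m := 1) le_rfl).differentiableAt one_ne_zero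
  have hdir : ∀ w : ℝ × ℝ, HasFDerivAt (uncurry fun a b => fderiv ℝ F (a, b) w)
      ((ContinuousLinearMap.apply ℝ ℝ w).comp (fderiv ℝ (fderiv ℝ F) (p, z))) (p, z) :=
    fun w => (ContinuousLinearMap.apply ℝ ℝ w).hasFDerivAt.comp (p, z) hd.hasFDerivAt
  have hnear : ∀ᶠ v in 𝓝 (p, z), DifferentiableAt ℝ F v :=
    eventually_of_mem (hs.mem_nhds hx) fun v hv =>
      (hf.contDiffAt (hs.mem_nhds hv)).differentiableAt two_ne_zero
  calc pdp (pdz f) p z = pdp (fun a b => fderiv ℝ F (a, b) (0, 1)) p z :=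
        pdp_congr (hnear.mono fun _ hv => pdz_eq_fderiv_s19 hv)
    _ = fderiv ℝ (fderiv ℝ F) (p, z) (1, 0) (0, 1) := by
        rw [pdp_eq_fderiv_s19 (hdir _).differentiableAt, (hdir _).fderiv]; rfl
    _ = fderiv ℝ (fderiv ℝ F) (p, z) (0, 1) (1, 0) :=
        hF.isSymmSndFDerivAt (by simp [minSmoothness_of_isRCLikeNormedField]) _ _
    _ = pdz (pdp f) p z := by
        rw [pdz_congr (f := pdp f) (g := fun a b => fderiv ℝ F (a, b) (1, 0))
            (hnear.mono fun _ hv => pdp_eq_fderiv_s19 hv),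
          pdz_eq_fderiv_s19 (hdir _).differentiableAt, (hdir _).fderiv]; rfl

end PartialDerivatives

noncomputable def potential (a b c ε y : ℝ) : ℝ :=
  4 * a * (y ^ 2 - b) / (y ^ 2 * (ε * y ^ 2 + c) ^ 2) - 1

theorem contDiffAt_potential {a b c ε y : ℝ} {n : WithTop ℕ∞}
    (h : y ^ 2 * (ε * y ^ 2 + c) ^ 2 ≠ 0) : ContDiffAt ℝ n (potential a b c ε) y := by
  unfold potential
  fun_prop (disch := exact h)

def SolvesAt (α β γ : ℝ → ℝ) (ε : ℝ) (f : ℝ → ℝ → ℝ) (p z : ℝ) : Prop :=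
  √(β p) < f p z ∧
  ((f p z) ^ 2 - β p) * (pdp f p z) ^ 2 - α p * (1 + (pdz f p z) ^ 2) = 0 ∧
  (f p z) ^ 2 * (ε * (f p z) ^ 2 + γ p) ^ 2 * (1 + (pdz f p z) ^ 2)
    - 4 * α p * ((f p z) ^ 2 - β p) = 0

namespace SolvesAt

variable {α β γ : ℝ → ℝ} {ε : ℝ} {f g : ℝ → ℝ → ℝ} {p z : ℝ}

theorem congr (h : SolvesAt α β γ ε f p z) (hfg : uncurry f =ᶠ[𝓝 (p, z)] uncurry g) :
    SolvesAt α β γ ε g p z := by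
  have hval : f p z = g p z := hfg.eq_of_nhds
  rw [SolvesAt, ← hval, ← pdz_congr hfg, ← pdp_congr hfg]
  exact h

theorem comp_two_mul_sub {z₀ : ℝ} (h : SolvesAt α β γ ε f p (2 * z₀ - z)) :
    SolvesAt α β γ ε (fun p z => f p (2 * z₀ - z)) p z := by
  have hpdz : pdz (fun p z => f p (2 * z₀ - z)) p z = -pdz f p (2 * z₀ - z) :=
    deriv_comp_const_sub ..
  obtain ⟨h₀, h₁, h₂⟩ := h
  refine ⟨h₀, ?_, ?_⟩ <;> rw [hpdz, neg_sq] <;> assumption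

theorem lt_sq (h : SolvesAt α β γ ε f p z) : β p < f p z ^ 2 := Real.lt_sq_of_sqrt_lt h.1

theorem denom_pos (h : SolvesAt α β γ ε f p z) (hα : 0 < α p) :
    0 < f p z ^ 2 * (ε * f p z ^ 2 + γ p) ^ 2 := by
  have h₂ := h.2.2
  have := h.lt_sq
  nlinarith [sq_nonneg (pdz f p z), sq_nonneg (f p z * (ε * f p z ^ 2 + γ p))]

theorem sq_pdz_eq_potential (h : SolvesAt α β γ ε f p z) (hα : 0 < α p) :
    pdz f p z ^ 2 = potential (α p) (β p) (γ p) ε (f p z) := by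
  rw [potential, eq_sub_iff_add_eq, eq_div_iff (h.denom_pos hα).ne']
  linear_combination h.2.2

end SolvesAt

section Slices

variable {f : ℝ → ℝ → ℝ} {s : Set (ℝ × ℝ)}

/- Differentiate the first equation in `z` and exchange the mixed partials of `f`. -/
theorem hasDerivAt_pdz_along_p {α β : ℝ → ℝ} (hs : IsOpen s)
    (hf : ContDiffOn ℝ 2 (uncurry f) s) {p z : ℝ} (hx : (p, z) ∈ s)
    (heq : ∀ᶠ t in 𝓝 z, (f p t ^ 2 - β p) * pdp f p t ^ 2 - α p * (1 + pdz f p t ^ 2) = 0)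
    (hβ : f p z ^ 2 - β p ≠ 0) (hP : pdp f p z ≠ 0) :
    HasDerivAt (fun q => pdz f q z)
      ((α p * pdzz f p z - f p z * pdp f p z ^ 2) / ((f p z ^ 2 - β p) * pdp f p z)
        * pdz f p z) p := by
  have hdiff : ∀ {g : ℝ → ℝ → ℝ}, ContDiffOn ℝ 1 (uncurry g) s →
      DifferentiableAt ℝ (uncurry g) (p, z) := fun hg =>
    (hg.contDiffAt (hs.mem_nhds hx)).differentiableAt one_ne_zero
  have hdf := hasDerivAt_pdz_s19 (hdiff (hf.of_le (by norm_num)))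
  have hdP := hasDerivAt_pdz_s19 (hdiff (contDiffOn_pdp hs hf (by norm_num)))
  have hdU := hasDerivAt_pdz_s19 (hdiff (contDiffOn_pdz hs hf (by norm_num)))
  have h0 := ((((hdf.pow 2).sub_const (β p)).mul (hdP.pow 2)).sub
    (((hdU.pow 2).const_add 1).const_mul (α p))).unique
      ((hasDerivAt_const z (0 : ℝ)).congr_of_eventuallyEq heq)
  have hN := hasDerivAt_pdp (hdiff (contDiffOn_pdz hs hf (by norm_num)))
  rw [pdp_pdz_eq_pdz_pdp hs hf hx] at hN
  convert hN using 1
  simp only [Pi.pow_apply] at h0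
  rw [show pdzz f p z = pdz (pdz f) p z from rfl]
  field_simp
  linear_combination (-1 / 2 : ℝ) * h0

theorem pdz_eq_zero_along_p {α β : ℝ → ℝ} {p₁ p₂ z₁ z₂ p₀ z₀ : ℝ}
    (hf : ContDiffOn ℝ 2 (uncurry f) (Ioo p₁ p₂ ×ˢ Ioo z₁ z₂))
    (hα : ContinuousOn α (Ioo p₁ p₂)) (hβ : ContinuousOn β (Ioo p₁ p₂))
    (heq : ∀ p ∈ Ioo p₁ p₂, ∀ z ∈ Ioo z₁ z₂,
      (f p z ^ 2 - β p) * pdp f p z ^ 2 - α p * (1 + pdz f p z ^ 2) = 0)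
    (hβf : ∀ p ∈ Ioo p₁ p₂, f p z₀ ^ 2 - β p ≠ 0) (hP : ∀ p ∈ Ioo p₁ p₂, pdp f p z₀ ≠ 0)
    (hp₀ : p₀ ∈ Ioo p₁ p₂) (hz₀ : z₀ ∈ Ioo z₁ z₂) (hcrit : pdz f p₀ z₀ = 0) :
    EqOn (fun p => pdz f p z₀) 0 (Ioo p₁ p₂) := by
  have hs : IsOpen (Ioo p₁ p₂ ×ˢ Ioo z₁ z₂) := isOpen_Ioo.prod isOpen_Ioo
  have hslice₀ : ∀ {g : ℝ → ℝ → ℝ}, ContDiffOn ℝ 0 (uncurry g) (Ioo p₁ p₂ ×ˢ Ioo z₁ z₂) →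
      ContinuousOn (fun p => g p z₀) (Ioo p₁ p₂) := fun hg =>
    hg.continuousOn.comp (continuous_id.prodMk continuous_const).continuousOn
      fun _ hp => ⟨hp, hz₀⟩
  have hslice₁ : ∀ {g : ℝ → ℝ → ℝ}, ContDiffOn ℝ 1 (uncurry g) (Ioo p₁ p₂ ×ˢ Ioo z₁ z₂) →
      ContinuousOn (fun p => g p z₀) (Ioo p₁ p₂) := fun hg => hslice₀ (hg.of_le (by norm_num))
  refine eqOn_zero_of_hasDerivAt_mul ?_ (fun p hp => hasDerivAt_pdz_along_p hs hf ⟨hp, hz₀⟩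
    (eventually_of_mem (isOpen_Ioo.mem_nhds hz₀) (heq p hp)) (hβf p hp) (hP p hp)) hp₀ hcrit
  refine ((hα.mul (hslice₀ (contDiffOn_pdz hs (contDiffOn_pdz hs hf (by norm_num)) le_rfl))).sub
    ((hslice₁ (hf.of_le (by norm_num))).mul ((hslice₁ (contDiffOn_pdp hs hf le_rfl)).pow 2))).div
    (((hslice₁ (hf.of_le (by norm_num))).pow 2 |>.sub hβ).mul
      (hslice₁ (contDiffOn_pdp hs hf le_rfl)))
    fun p hp => mul_ne_zero (hβf p hp) (hP p hp)

end Slices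

theorem SolvesAt.eq_comp_two_mul_sub {α β γ : ℝ → ℝ} {ε : ℝ} {f : ℝ → ℝ → ℝ}
    {s : Set (ℝ × ℝ)} {p z₁ z₂ z₀ : ℝ} (hs : IsOpen s) (hf : ContDiffOn ℝ 2 (uncurry f) s)
    (hslice : ∀ z ∈ Ioo z₁ z₂, (p, z) ∈ s) (hsol : ∀ z ∈ Ioo z₁ z₂, SolvesAt α β γ ε f p z)
    (hα : 0 < α p) (hz₀ : z₀ ∈ Ioo z₁ z₂) (hcrit : pdz f p z₀ = 0) (hnondeg : pdzz f p z₀ ≠ 0)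
    {z : ℝ} (hz : z ∈ Ioo z₁ z₂) (hz' : 2 * z₀ - z ∈ Ioo z₁ z₂) : f p z = f p (2 * z₀ - z) := by
  set Φ := potential (α p) (β p) (γ p) ε
  have hdiff : ∀ {g : ℝ → ℝ → ℝ}, ContDiffOn ℝ 1 (uncurry g) s → ∀ t ∈ Ioo z₁ z₂,
      DifferentiableAt ℝ (uncurry g) (p, t) := fun hg t ht =>
    (hg.contDiffAt (hs.mem_nhds (hslice t ht))).differentiableAt one_ne_zero
  have hy : ∀ t ∈ Ioo z₁ z₂, HasDerivAt (f p) (pdz f p t) t := fun t ht =>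
    hasDerivAt_pdz_s19 (hdiff (hf.of_le (by norm_num)) t ht)
  have hu : ∀ t ∈ Ioo z₁ z₂, HasDerivAt (pdz f p) (pdzz f p t) t := fun t ht =>
    hasDerivAt_pdz_s19 (hdiff (contDiffOn_pdz hs hf le_rfl) t ht)
  have hΦ : ∀ t ∈ Ioo z₁ z₂, ContDiffAt ℝ 2 Φ (f p t) := fun t ht =>
    contDiffAt_potential ((hsol t ht).denom_pos hα).ne'
  have hH : ∀ t ∈ Ioo z₁ z₂, ContDiffAt ℝ 1 (fun y => deriv Φ y / 2) (f p t) := fun t ht =>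
    ((hΦ t ht).derivWithin le_rfl).div_const 2
  have hmul : ∀ t ∈ Ioo z₁ z₂, pdz f p t * (pdzz f p t - deriv Φ (f p t) / 2) = 0 :=
    fun t ht => (hy t ht).mul_sub_half_eq_zero_of_sq_eventuallyEq (hu t ht)
      ((hΦ t ht).differentiableAt two_ne_zero).hasDerivAt
      (eventually_of_mem (isOpen_Ioo.mem_nhds ht) fun τ hτ =>
        (hsol τ hτ).sq_pdz_eq_potential hα)
  have hne : ∃ t ∈ Ioo z₁ z₂, pdz f p t ≠ 0 := by
    by_contra! hflat
    exact hnondeg ((hu z₀ hz₀).unique ((hasDerivAt_const z₀ 0).congr_of_eventuallyEq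
      (eventually_of_mem (isOpen_Ioo.mem_nhds hz₀) hflat)))
  have hrel := eqOn_comp_of_mul_sub_eq_zero hy hu
    ((contDiffOn_pdz (m := 0) hs (contDiffOn_pdz (m := 1) hs hf le_rfl) le_rfl).continuousOn.comp
      (continuous_const.prodMk continuous_id).continuousOn hslice)
    (fun t ht => (hH t ht).continuousAt) hmul hne
  exact eq_comp_two_mul_sub_of_hasDerivAt hy (fun t ht => (hu t ht).congr_deriv (hrel ht)) hH
    hz₀ hcrit hz hz'

theorem mem_Ioo_or_two_mul_sub_mem_Ioo {z₁ z₂ z₀ z : ℝ} (hz₀ : z₀ ∈ Ioo z₁ z₂)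
    (hz : z ∈ Ioo (z₀ - max (z₂ - z₀) (z₀ - z₁)) (z₀ + max (z₂ - z₀) (z₀ - z₁))) :
    z ∈ Ioo z₁ z₂ ∨ 2 * z₀ - z ∈ Ioo z₁ z₂ := by
  obtain ⟨hz₁, hz₂⟩ := hz₀
  rcases le_total (z₀ - z₁) (z₂ - z₀) with h | h <;>
  [rw [max_eq_left h] at hz; rw [max_eq_right h] at hz] <;>
  [by_cases hz' : z₁ < z; by_cases hz' : z < z₂] <;> simp only [mem_Ioo] at hz ⊢ <;>
    first | (left; constructor <;> linarith) | (right; constructor <;> linarith)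

theorem exists_extension_of_symmetric {α β γ : ℝ → ℝ} {ε : ℝ} {f : ℝ → ℝ → ℝ} {I : Set ℝ}
    {z₁ z₂ z₀ : ℝ} {n : WithTop ℕ∞} (hI : IsOpen I) (hz₀ : z₀ ∈ Ioo z₁ z₂)
    (hf : ContDiffOn ℝ n (uncurry f) (I ×ˢ Ioo z₁ z₂))
    (hsol : ∀ p ∈ I, ∀ z ∈ Ioo z₁ z₂, SolvesAt α β γ ε f p z)
    (hsym : ∀ p ∈ I, ∀ z ∈ Ioo z₁ z₂, 2 * z₀ - z ∈ Ioo z₁ z₂ → f p z = f p (2 * z₀ - z)) :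
    ∃ Δ : ℝ, 0 < Δ ∧ Ioo z₁ z₂ ⊆ Ioo (z₀ - Δ) (z₀ + Δ) ∧ ∃ g : ℝ → ℝ → ℝ,
      ContDiffOn ℝ n (uncurry g) (I ×ˢ Ioo (z₀ - Δ) (z₀ + Δ)) ∧
      (∀ p ∈ I, ∀ z ∈ Ioo z₁ z₂, g p z = f p z) ∧
      ∀ p ∈ I, ∀ z ∈ Ioo (z₀ - Δ) (z₀ + Δ), SolvesAt α β γ ε g p z := by
  classical
  set g : ℝ → ℝ → ℝ := fun p z => if z ∈ Ioo z₁ z₂ then f p z else f p (2 * z₀ - z)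
  set fr : ℝ → ℝ → ℝ := fun p z => f p (2 * z₀ - z)
  have hgf : ∀ p z, z ∈ Ioo z₁ z₂ → uncurry g =ᶠ[𝓝 (p, z)] uncurry f := fun p z hz => by
    filter_upwards [(isOpen_Ioo.preimage continuous_snd).mem_nhds hz] with v hv
    exact if_pos hv
  have hgfr : ∀ p ∈ I, ∀ z, 2 * z₀ - z ∈ Ioo z₁ z₂ → uncurry g =ᶠ[𝓝 (p, z)] uncurry fr :=
    fun p hp z hz => by
    filter_upwards [(hI.prod (isOpen_Ioo.preimage (by fun_prop))).mem_nhds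
      (show (p, z) ∈ I ×ˢ ((fun t => 2 * z₀ - t) ⁻¹' Ioo z₁ z₂) from ⟨hp, hz⟩)] with v hv
    show g v.1 v.2 = f v.1 (2 * z₀ - v.2)
    by_cases hv₂ : v.2 ∈ Ioo z₁ z₂
    · rw [← hsym v.1 hv.1 v.2 hv₂ hv.2]
      exact if_pos hv₂
    · exact if_neg hv₂
  refine ⟨max (z₂ - z₀) (z₀ - z₁), lt_max_of_lt_left (by linarith [hz₀.2]), fun z hz =>
    ⟨by linarith [hz.1, le_max_right (z₂ - z₀) (z₀ - z₁)],
      by linarith [hz.2, le_max_left (z₂ - z₀) (z₀ - z₁)]⟩, g, ?_, ?_, ?_⟩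
  · intro v hv
    have hopen : IsOpen (I ×ˢ Ioo z₁ z₂) := hI.prod isOpen_Ioo
    refine ContDiffAt.contDiffWithinAt ?_
    rcases mem_Ioo_or_two_mul_sub_mem_Ioo hz₀ hv.2 with h | h
    · exact (hf.contDiffAt (hopen.mem_nhds ⟨hv.1, h⟩)).congr_of_eventuallyEq (hgf v.1 v.2 h)
    · have hfr : ContDiffAt ℝ n (uncurry fr) v :=
        ContDiffAt.comp (g := uncurry f) (f := fun w : ℝ × ℝ => (w.1, 2 * z₀ - w.2)) v
          (hf.contDiffAt (hopen.mem_nhds ⟨hv.1, h⟩)) (by fun_prop)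
      exact hfr.congr_of_eventuallyEq (hgfr v.1 hv.1 v.2 h)
  · exact fun p _ z hz => if_pos hz
  · intro p hp z hz
    rcases mem_Ioo_or_two_mul_sub_mem_Ioo hz₀ hz with hz' | hz'
    · exact (hsol p hp z hz').congr (hgf p z hz').symm
    · exact (hsol p hp _ hz').comp_two_mul_sub.congr (hgfr p hp z hz').symm

theorem reflection_symmetry_general (p₁ p₂ z₁ z₂ : ℝ)
    (α β γ : ℝ → ℝ)
    (hα : ContDiffOn ℝ 1 α (Set.Ioo p₁ p₂)) (hβ : ContDiffOn ℝ 1 β (Set.Ioo p₁ p₂))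
    (hαpos : ∀ p ∈ Set.Ioo p₁ p₂, 0 < α p)
    (ε : ℝ)
    (f : ℝ → ℝ → ℝ)
    (hf : ContDiffOn ℝ (⊤ : ℕ∞) (fun v : ℝ × ℝ => f v.1 v.2)
      (Set.Ioo p₁ p₂ ×ˢ Set.Ioo z₁ z₂))
    (hfβ : ∀ p ∈ Set.Ioo p₁ p₂, ∀ z ∈ Set.Ioo z₁ z₂, Real.sqrt (β p) < f p z)
    (heq1 : ∀ p ∈ Set.Ioo p₁ p₂, ∀ z ∈ Set.Ioo z₁ z₂,
      ((f p z) ^ 2 - β p) * (pdp f p z) ^ 2 - α p * (1 + (pdz f p z) ^ 2) = 0)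
    (heq2 : ∀ p ∈ Set.Ioo p₁ p₂, ∀ z ∈ Set.Ioo z₁ z₂,
      (f p z) ^ 2 * (ε * (f p z) ^ 2 + γ p) ^ 2 * (1 + (pdz f p z) ^ 2)
        - 4 * α p * ((f p z) ^ 2 - β p) = 0)
    (hsign : ∀ p ∈ Set.Ioo p₁ p₂, ∀ z ∈ Set.Ioo z₁ z₂, 0 < ε * pdp f p z)
    (p₀ z₀ : ℝ) (hp₀ : p₀ ∈ Set.Ioo p₁ p₂) (hz₀ : z₀ ∈ Set.Ioo z₁ z₂)
    (hcrit : pdz f p₀ z₀ = 0) (hnondeg : pdzz f p₀ z₀ ≠ 0) :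
    ∃ δ : ℝ, 0 < δ ∧ Set.Ioo (p₀ - δ) (p₀ + δ) ⊆ Set.Ioo p₁ p₂ ∧
      -- reflection symmetry about z₀
      (∀ p ∈ Set.Ioo (p₀ - δ) (p₀ + δ), ∀ z ∈ Set.Ioo z₁ z₂,
        2 * z₀ - z ∈ Set.Ioo z₁ z₂ → f p z = f p (2 * z₀ - z)) ∧
      (∀ p ∈ Set.Ioo (p₀ - δ) (p₀ + δ), pdz f p z₀ = 0) ∧
      -- extension of the solution to a z-symmetric rectangle containing (z₁, z₂)
      ∃ Δ : ℝ, 0 < Δ ∧ Set.Ioo z₁ z₂ ⊆ Set.Ioo (z₀ - Δ) (z₀ + Δ) ∧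
        ∃ g : ℝ → ℝ → ℝ,
          ContDiffOn ℝ (⊤ : ℕ∞) (fun v : ℝ × ℝ => g v.1 v.2)
            (Set.Ioo (p₀ - δ) (p₀ + δ) ×ˢ Set.Ioo (z₀ - Δ) (z₀ + Δ)) ∧
          (∀ p ∈ Set.Ioo (p₀ - δ) (p₀ + δ), ∀ z ∈ Set.Ioo z₁ z₂, g p z = f p z) ∧
          (∀ p ∈ Set.Ioo (p₀ - δ) (p₀ + δ), ∀ z ∈ Set.Ioo (z₀ - Δ) (z₀ + Δ),
            Real.sqrt (β p) < g p z ∧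
            ((g p z) ^ 2 - β p) * (pdp g p z) ^ 2 - α p * (1 + (pdz g p z) ^ 2) = 0 ∧
            (g p z) ^ 2 * (ε * (g p z) ^ 2 + γ p) ^ 2 * (1 + (pdz g p z) ^ 2)
              - 4 * α p * ((g p z) ^ 2 - β p) = 0) := by
  have hD : IsOpen (Ioo p₁ p₂ ×ˢ Ioo z₁ z₂) := isOpen_Ioo.prod isOpen_Ioo
  have hf₂ : ContDiffOn ℝ 2 (uncurry f) (Ioo p₁ p₂ ×ˢ Ioo z₁ z₂) :=
    hf.of_le (WithTop.coe_le_coe.2 le_top)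
  have hsol : ∀ p ∈ Ioo p₁ p₂, ∀ z ∈ Ioo z₁ z₂, SolvesAt α β γ ε f p z :=
    fun p hp z hz => ⟨hfβ p hp z hz, heq1 p hp z hz, heq2 p hp z hz⟩
  have hline : EqOn (fun p => pdz f p z₀) 0 (Ioo p₁ p₂) :=
    pdz_eq_zero_along_p hf₂ hα.continuousOn hβ.continuousOn heq1
      (fun p hp => (sub_pos.2 (hsol p hp z₀ hz₀).lt_sq).ne')
      (fun p hp h => (hsign p hp z₀ hz₀).ne' (by rw [h, mul_zero])) hp₀ hz₀ hcrit
  obtain ⟨δ, hδ, hδsub⟩ : ∃ δ > 0, ∀ p ∈ Ioo (p₀ - δ) (p₀ + δ),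
      p ∈ Ioo p₁ p₂ ∧ pdzz f p z₀ ≠ 0 := by
    have hcont : ContinuousAt (fun p => pdzz f p z₀) p₀ :=
      ((contDiffOn_pdz (m := 0) hD (contDiffOn_pdz (m := 1) hD hf₂ le_rfl) le_rfl).continuousOn
        |>.continuousAt (hD.mem_nhds ⟨hp₀, hz₀⟩)).comp
          (continuous_id.prodMk continuous_const).continuousAt
    simpa only [Real.ball_eq_Ioo] using Metric.eventually_nhds_iff_ball.1
      ((show ∀ᶠ p in 𝓝 p₀, p ∈ Ioo p₁ p₂ from isOpen_Ioo.mem_nhds hp₀).and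
        (hcont.eventually_ne hnondeg))
  have hsym : ∀ p ∈ Ioo (p₀ - δ) (p₀ + δ), ∀ z ∈ Ioo z₁ z₂,
      2 * z₀ - z ∈ Ioo z₁ z₂ → f p z = f p (2 * z₀ - z) := fun p hp z hz hz' =>
    SolvesAt.eq_comp_two_mul_sub hD hf₂ (fun t ht => ⟨(hδsub p hp).1, ht⟩)
      (hsol p (hδsub p hp).1) (hαpos p (hδsub p hp).1) hz₀ (hline (hδsub p hp).1)
      (hδsub p hp).2 hz hz'
  refine ⟨δ, hδ, fun p hp => (hδsub p hp).1, hsym, fun p hp => hline (hδsub p hp).1, ?_⟩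
  exact exists_extension_of_symmetric isOpen_Ioo hz₀
    (hf.mono (prod_mono (fun p hp => (hδsub p hp).1) subset_rfl))
    (fun p hp => hsol p (hδsub p hp).1) hsym

/-- Lemma 9.1: let `f` solve, on `(p₁,p₂)×(z₁,z₂)`, the system
`(f²−β)f'_p² − α(1+f'_z²) = 0`, `f²(εf²+γ)²(1+f'_z²) − 4α(f²−β) = 0` with `f > √β`
(`ε = ±1` the sign of the nonvanishing `f'_p`).  If `f'_z(p₀,z₀) = 0` and
`f''_{zz}(p₀,z₀) ≠ 0` at some point of the rectangle, then near `p₀` the solution is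
symmetric with respect to `z₀` (`f(p,z) = f(p,2z₀−z)`, in particular `f'_z(p,z₀) = 0`),
and `f` extends to a solution on `(p₀−δ,p₀+δ)×(z₀−Δ,z₀+Δ)` with
`(z₁,z₂) ⊆ (z₀−Δ,z₀+Δ)`. -/
theorem reflection_symmetry (p₁ p₂ z₁ z₂ : ℝ)
    (α β γ : ℝ → ℝ)
    (hα : ContDiffOn ℝ 1 α (Set.Ioo p₁ p₂)) (hβ : ContDiffOn ℝ 1 β (Set.Ioo p₁ p₂))
    (hγ : ContDiffOn ℝ 1 γ (Set.Ioo p₁ p₂))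
    (hαpos : ∀ p ∈ Set.Ioo p₁ p₂, 0 < α p) (hβnn : ∀ p ∈ Set.Ioo p₁ p₂, 0 ≤ β p)
    (ε : ℝ) (hε : ε = 1 ∨ ε = -1)
    (f : ℝ → ℝ → ℝ)
    (hf : ContDiffOn ℝ (⊤ : ℕ∞) (fun v : ℝ × ℝ => f v.1 v.2)
      (Set.Ioo p₁ p₂ ×ˢ Set.Ioo z₁ z₂))
    (hfβ : ∀ p ∈ Set.Ioo p₁ p₂, ∀ z ∈ Set.Ioo z₁ z₂, Real.sqrt (β p) < f p z)
    (heq1 : ∀ p ∈ Set.Ioo p₁ p₂, ∀ z ∈ Set.Ioo z₁ z₂,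
      ((f p z) ^ 2 - β p) * (pdp f p z) ^ 2 - α p * (1 + (pdz f p z) ^ 2) = 0)
    (heq2 : ∀ p ∈ Set.Ioo p₁ p₂, ∀ z ∈ Set.Ioo z₁ z₂,
      (f p z) ^ 2 * (ε * (f p z) ^ 2 + γ p) ^ 2 * (1 + (pdz f p z) ^ 2)
        - 4 * α p * ((f p z) ^ 2 - β p) = 0)
    (hsign : ∀ p ∈ Set.Ioo p₁ p₂, ∀ z ∈ Set.Ioo z₁ z₂, 0 < ε * pdp f p z)
    (p₀ z₀ : ℝ) (hp₀ : p₀ ∈ Set.Ioo p₁ p₂) (hz₀ : z₀ ∈ Set.Ioo z₁ z₂)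
    (hcrit : pdz f p₀ z₀ = 0) (hnondeg : pdzz f p₀ z₀ ≠ 0) :
    ∃ δ : ℝ, 0 < δ ∧ Set.Ioo (p₀ - δ) (p₀ + δ) ⊆ Set.Ioo p₁ p₂ ∧
      -- reflection symmetry about z₀
      (∀ p ∈ Set.Ioo (p₀ - δ) (p₀ + δ), ∀ z ∈ Set.Ioo z₁ z₂,
        2 * z₀ - z ∈ Set.Ioo z₁ z₂ → f p z = f p (2 * z₀ - z)) ∧
      (∀ p ∈ Set.Ioo (p₀ - δ) (p₀ + δ), pdz f p z₀ = 0) ∧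
      -- extension of the solution to a z-symmetric rectangle containing (z₁, z₂)
      ∃ Δ : ℝ, 0 < Δ ∧ Set.Ioo z₁ z₂ ⊆ Set.Ioo (z₀ - Δ) (z₀ + Δ) ∧
        ∃ g : ℝ → ℝ → ℝ,
          ContDiffOn ℝ (⊤ : ℕ∞) (fun v : ℝ × ℝ => g v.1 v.2)
            (Set.Ioo (p₀ - δ) (p₀ + δ) ×ˢ Set.Ioo (z₀ - Δ) (z₀ + Δ)) ∧
          (∀ p ∈ Set.Ioo (p₀ - δ) (p₀ + δ), ∀ z ∈ Set.Ioo z₁ z₂, g p z = f p z) ∧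
          (∀ p ∈ Set.Ioo (p₀ - δ) (p₀ + δ), ∀ z ∈ Set.Ioo (z₀ - Δ) (z₀ + Δ),
            Real.sqrt (β p) < g p z ∧
            ((g p z) ^ 2 - β p) * (pdp g p z) ^ 2 - α p * (1 + (pdz g p z) ^ 2) = 0 ∧
            (g p z) ^ 2 * (ε * (g p z) ^ 2 + γ p) ^ 2 * (1 + (pdz g p z) ^ 2)
              - 4 * α p * ((g p z) ^ 2 - β p) = 0) :=
  reflection_symmetry_general p₁ p₂ z₁ z₂ α β γ hα hβ hαpos ε f hf hfβ heq1 heq2 hsign p₀ z₀ hp₀ hz₀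
    hcrit hnondeg
end
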